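/- arXiv:2005.05888 — 4 statements merged into one kernel-verified Lean document; each statement's English description precedes it below -/
import Mathlib

section
/- Let n, m be positive integers, M ∈ ℝ^{n×n}, and let P, Q ∈ ℝ^{n×n} be symmetric positive definite with MᵀPM − P ⪯ −Q and satisfying the gain condition 4·p̄⋆²·Lφ²·λmax(P) + 8·p̄⋆·Lφ·‖PM‖_F ≤ λmin(Q). Let ψ̃ : ℝⁿ → ℝᵐ satisfy ‖ψ̃(x)‖ ≤ φ̄ and ‖ψ̃(x′) − ψ̃(x)‖ ≤ Lφ·‖x′ − x‖ for all x, x′ ∈ ℝⁿ, and let p⋆, p ∈ ℝ^{m×n} with operator norm ‖p⋆‖ ≤ p̄⋆; set eᵖ := p − p⋆. Let x, e ∈ ℝⁿ and define e⁺ := M e + pᵀψ̃(x + e) − p⋆ᵀψ̃(x). If ‖eᵖ‖ ≤ (λmin(Q) / (8·φ̄·(λmax(P)·Lφ·p̄⋆ + ‖PM‖_F)))·‖e‖, then (e⁺)ᵀP e⁺ − eᵀP e ≤ −(λmin(Q)/2)·‖e‖² + φ̄²·λmax(P)·‖eᵖ‖². -/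
open Matrix MeasureTheory Filter

noncomputable def lamMin {n : ℕ} (A : Matrix (Fin n) (Fin n) ℝ) : ℝ :=
  sInf (spectrum ℝ A)

noncomputable def lamMax {n : ℕ} (A : Matrix (Fin n) (Fin n) ℝ) : ℝ :=
  sSup (spectrum ℝ A)

noncomputable def frobNorm {m n : ℕ} (M : Matrix (Fin m) (Fin n) ℝ) : ℝ :=
  Real.sqrt (∑ i, ∑ j, (M i j) ^ 2)

noncomputable def mulVecE {m n : ℕ} (M : Matrix (Fin m) (Fin n) ℝ)
    (x : EuclideanSpace ℝ (Fin n)) : EuclideanSpace ℝ (Fin m) :=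
  Matrix.toEuclideanLin M x

noncomputable def quadForm {n : ℕ} (P : Matrix (Fin n) (Fin n) ℝ)
    (x : EuclideanSpace ℝ (Fin n)) : ℝ :=
  inner ℝ x (mulVecE P x)

noncomputable def opNorm {m n : ℕ} (p : Matrix (Fin m) (Fin n) ℝ) : ℝ :=
  ‖LinearMap.toContinuousLinearMap (Matrix.toEuclideanLin p)‖

/-!
Write `e⁺ = M e + D` with `D = (p - p⋆)ᵀ ψ(x + e) + p⋆ᵀ (ψ(x + e) - ψ(x))`, so that
`‖D‖ ≤ φ̄ ‖eᵖ‖ + p̄⋆ Lφ ‖e‖`. Expanding `V(M e + D) = V(M e) + 2 ⟪D, P M e⟫ + V(D)`, the Lyapunov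
inequality gives `V(M e) ≤ V(e) - λmin(Q) ‖e‖²`, while the other two terms are at most
`2 ‖D‖ ‖P M‖_F ‖e‖ + λmax(P) ‖D‖²`. In this bound the gain condition absorbs the terms quadratic in
`‖e‖` into `λmin(Q) ‖e‖² / 4`, the cone condition absorbs the mixed terms into another
`λmin(Q) ‖e‖² / 4`, and `φ̄² λmax(P) ‖eᵖ‖²` is what remains.
-/

open scoped RealInnerProductSpace

section QuadraticForms

variable {k l r : ℕ}

lemma mulVecE_mul (A : Matrix (Fin k) (Fin l) ℝ) (B : Matrix (Fin l) (Fin r) ℝ)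
    (x : EuclideanSpace ℝ (Fin r)) : mulVecE (A * B) x = mulVecE A (mulVecE B x) := by
  simp [mulVecE, Matrix.toLpLin_apply, Matrix.mulVec_mulVec]

lemma mulVecE_sub (A B : Matrix (Fin k) (Fin l) ℝ) (x : EuclideanSpace ℝ (Fin l)) :
    mulVecE (A - B) x = mulVecE A x - mulVecE B x := by
  simp [mulVecE]

lemma mulVecE_sub_right (A : Matrix (Fin k) (Fin l) ℝ) (x y : EuclideanSpace ℝ (Fin l)) :
    mulVecE A (x - y) = mulVecE A x - mulVecE A y :=
  map_sub (Matrix.toEuclideanLin A) x y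

lemma mulVecE_add_right (A : Matrix (Fin k) (Fin l) ℝ) (x y : EuclideanSpace ℝ (Fin l)) :
    mulVecE A (x + y) = mulVecE A x + mulVecE A y :=
  map_add (Matrix.toEuclideanLin A) x y

lemma inner_mulVecE_transpose (A : Matrix (Fin k) (Fin l) ℝ) (u : EuclideanSpace ℝ (Fin k))
    (v : EuclideanSpace ℝ (Fin l)) : ⟪mulVecE Aᵀ u, v⟫ = ⟪u, mulVecE A v⟫ := by
  rw [mulVecE, ← Matrix.conjTranspose_eq_transpose_of_trivial,
    Matrix.toEuclideanLin_conjTranspose_eq_adjoint, LinearMap.adjoint_inner_left, mulVecE]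

lemma quadForm_sub (A B : Matrix (Fin k) (Fin k) ℝ) (x : EuclideanSpace ℝ (Fin k)) :
    quadForm (A - B) x = quadForm A x - quadForm B x := by
  rw [quadForm, quadForm, quadForm, mulVecE_sub, inner_sub_right]

lemma quadForm_algebraMap (c : ℝ) (x : EuclideanSpace ℝ (Fin k)) :
    quadForm (algebraMap ℝ (Matrix (Fin k) (Fin k) ℝ) c) x = c * ‖x‖ ^ 2 := by
  rw [quadForm, Algebra.algebraMap_eq_smul_one, ← real_inner_self_eq_norm_sq,
    ← real_inner_smul_right]
  simp [mulVecE]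

lemma quadForm_add {P : Matrix (Fin k) (Fin k) ℝ} (hP : P.IsHermitian)
    (u v : EuclideanSpace ℝ (Fin k)) :
    quadForm P (u + v) = quadForm P u + 2 * ⟪v, mulVecE P u⟫ + quadForm P v := by
  have hsymm : ⟪u, mulVecE P v⟫ = ⟪v, mulVecE P u⟫ := by
    rw [real_inner_comm]
    exact (Matrix.isSymmetric_toEuclideanLin_iff.mpr hP) v u
  rw [quadForm, quadForm, quadForm, mulVecE_add_right, inner_add_left, inner_add_right,
    inner_add_right, hsymm]
  ring

lemma quadForm_mulVecE (P : Matrix (Fin l) (Fin l) ℝ) (M : Matrix (Fin l) (Fin k) ℝ)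
    (x : EuclideanSpace ℝ (Fin k)) : quadForm P (mulVecE M x) = quadForm (Mᵀ * P * M) x := by
  rw [quadForm, quadForm, Matrix.mul_assoc, mulVecE_mul, mulVecE_mul,
    real_inner_comm (mulVecE Mᵀ _), inner_mulVecE_transpose]
  exact real_inner_comm _ _

lemma Matrix.PosSemidef.quadForm_nonneg {S : Matrix (Fin k) (Fin k) ℝ} (hS : S.PosSemidef)
    (x : EuclideanSpace ℝ (Fin k)) : 0 ≤ quadForm S x :=
  (Matrix.isPositive_toEuclideanLin_iff.mpr hS).inner_nonneg_right x

end QuadraticForms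

section Spectrum

open scoped MatrixOrder

variable {k : ℕ} {A B : Matrix (Fin k) (Fin k) ℝ}

lemma quadForm_le_quadForm (h : A ≤ B) (x : EuclideanSpace ℝ (Fin k)) :
    quadForm A x ≤ quadForm B x :=
  sub_nonneg.mp (quadForm_sub B A x ▸ (Matrix.le_iff.mp h).quadForm_nonneg x)

lemma Matrix.IsHermitian.algebraMap_lamMin_le (hA : A.IsHermitian) :
    algebraMap ℝ _ (lamMin A) ≤ A :=
  (algebraMap_le_iff_le_spectrum (p := IsSelfAdjoint) hA).mpr fun _ hx ↦
    csInf_le Matrix.finite_real_spectrum.bddBelow hx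

lemma Matrix.IsHermitian.le_algebraMap_lamMax (hA : A.IsHermitian) :
    A ≤ algebraMap ℝ _ (lamMax A) :=
  (le_algebraMap_iff_spectrum_le (p := IsSelfAdjoint) hA).mpr fun _ hx ↦
    le_csSup Matrix.finite_real_spectrum.bddAbove hx

lemma Matrix.IsHermitian.lamMin_mul_norm_sq_le (hA : A.IsHermitian)
    (x : EuclideanSpace ℝ (Fin k)) :
    lamMin A * ‖x‖ ^ 2 ≤ quadForm A x :=
  quadForm_algebraMap (lamMin A) x ▸ quadForm_le_quadForm hA.algebraMap_lamMin_le x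

lemma Matrix.IsHermitian.quadForm_le_lamMax_mul (hA : A.IsHermitian)
    (x : EuclideanSpace ℝ (Fin k)) :
    quadForm A x ≤ lamMax A * ‖x‖ ^ 2 :=
  quadForm_algebraMap (lamMax A) x ▸ quadForm_le_quadForm hA.le_algebraMap_lamMax x

lemma Matrix.PosSemidef.lamMax_nonneg (hA : A.PosSemidef) : 0 ≤ lamMax A :=
  Real.sSup_nonneg fun _ hx ↦ spectrum_nonneg_of_nonneg hA.nonneg hx

end Spectrum

section Norms

variable {k l : ℕ}

section L2

open scoped Matrix.Norms.L2Operator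

lemma norm_mulVecE_le_opNorm (A : Matrix (Fin k) (Fin l) ℝ) (x : EuclideanSpace ℝ (Fin l)) :
    ‖mulVecE A x‖ ≤ opNorm A * ‖x‖ :=
  (LinearMap.toContinuousLinearMap (Matrix.toEuclideanLin A)).le_opNorm x

lemma opNorm_transpose (A : Matrix (Fin k) (Fin l) ℝ) : opNorm Aᵀ = opNorm A := by
  rw [← Matrix.conjTranspose_eq_transpose_of_trivial]
  exact Matrix.l2_opNorm_conjTranspose A

end L2

section Frobenius

attribute [local instance] Matrix.frobeniusNormedAddCommGroup

lemma frobNorm_nonneg (A : Matrix (Fin k) (Fin l) ℝ) : 0 ≤ frobNorm A :=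
  Real.sqrt_nonneg _

lemma frobNorm_eq_norm (A : Matrix (Fin k) (Fin l) ℝ) : frobNorm A = ‖A‖ := by
  simp [frobNorm, Matrix.frobenius_norm_def, Real.sqrt_eq_rpow]

lemma norm_mulVecE_le_frobNorm (A : Matrix (Fin k) (Fin l) ℝ) (x : EuclideanSpace ℝ (Fin l)) :
    ‖mulVecE A x‖ ≤ frobNorm A * ‖x‖ := by
  have hcol {j : ℕ} (v : EuclideanSpace ℝ (Fin j)) : ‖Matrix.replicateCol Unit v.ofLp‖ = ‖v‖ :=
    Matrix.frobenius_norm_replicateCol _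
  rw [frobNorm_eq_norm, ← hcol, ← hcol x, mulVecE, Matrix.toLpLin_apply, Matrix.replicateCol_mulVec]
  exact Matrix.frobenius_norm_mul A _

end Frobenius

lemma norm_transpose_mulVecE_sub_le (p p' : Matrix (Fin k) (Fin l) ℝ)
    (u v : EuclideanSpace ℝ (Fin k)) :
    ‖mulVecE pᵀ u - mulVecE p'ᵀ v‖ ≤ opNorm (p - p') * ‖u‖ + opNorm p' * ‖u - v‖ := by
  have hsplit : mulVecE pᵀ u - mulVecE p'ᵀ v = mulVecE (p - p')ᵀ u + mulVecE p'ᵀ (u - v) := by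
    rw [Matrix.transpose_sub, mulVecE_sub, mulVecE_sub_right]
    abel
  rw [hsplit, ← opNorm_transpose, ← opNorm_transpose p']
  exact (norm_add_le _ _).trans
    (add_le_add (norm_mulVecE_le_opNorm _ _) (norm_mulVecE_le_opNorm _ _))

end Norms

lemma quadForm_mulVecE_le_of_posSemidef {k : ℕ} {P M Q : Matrix (Fin k) (Fin k) ℝ}
    (hQ : Q.IsHermitian) (hLyap : (P - Mᵀ * P * M - Q).PosSemidef) (e : EuclideanSpace ℝ (Fin k)) :
    quadForm P (mulVecE M e) ≤ quadForm P e - lamMin Q * ‖e‖ ^ 2 := by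
  have h := hLyap.quadForm_nonneg e
  rw [quadForm_sub, quadForm_sub, ← quadForm_mulVecE] at h
  linarith [hQ.lamMin_mul_norm_sq_le e]

lemma mul_le_of_le_div_mul {a b c d : ℝ} (ha : 0 ≤ a) (hb : 0 ≤ b) (hd : 0 ≤ d)
    (h : c ≤ b / a * d) : a * c ≤ b * d := by
  rcases ha.eq_or_lt with rfl | ha
  · simpa using mul_nonneg hb hd
  · rwa [div_mul_eq_mul_div, le_div_iff₀ ha, mul_comm] at h

lemma cone_gain_bound {lQ lP F φ L p ε E δ : ℝ} (hlP : 0 ≤ lP) (hF : 0 ≤ F) (hφ : 0 ≤ φ)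
    (hL : 0 ≤ L) (hp : 0 ≤ p) (hE : 0 ≤ E) (hδ : 0 ≤ δ)
    (hgain : 4 * p ^ 2 * L ^ 2 * lP + 8 * p * L * F ≤ lQ)
    (hcone : ε ≤ lQ / (8 * φ * (lP * L * p + F)) * E)
    (hδle : δ ≤ ε * φ + p * (L * E)) :
    2 * (δ * (F * E)) + lP * δ ^ 2 ≤ lQ / 2 * E ^ 2 + φ ^ 2 * lP * ε ^ 2 := by
  have hcone' : 8 * φ * (lP * L * p + F) * ε ≤ lQ * E :=
    mul_le_of_le_div_mul (by positivity) (le_trans (by positivity) hgain) hE hcone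
  have hδ2 : δ ^ 2 ≤ (ε * φ + p * (L * E)) ^ 2 := pow_le_pow_left₀ hδ hδle 2
  -- the mixed terms are a quarter of `hcone' * E`, those quadratic in `E` a quarter of `hgain * E²`
  nlinarith [mul_le_mul_of_nonneg_right hcone' hE, mul_le_mul_of_nonneg_right hgain (sq_nonneg E),
    mul_le_mul_of_nonneg_left hδle (mul_nonneg hF hE), mul_le_mul_of_nonneg_left hδ2 hlP]

theorem stmt_0_general {n m : ℕ}
    (M P Q : Matrix (Fin n) (Fin n) ℝ)
    (phibar Lphi pbar : ℝ)
    (hphibar : 0 < phibar) (hLphi : 0 < Lphi) (hpbar : 0 < pbar)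
    (hP : P.PosDef) (hQ : Q.PosDef)
    (hLyap : (P - Mᵀ * P * M - Q).PosSemidef)
    (hgain : 4 * pbar ^ 2 * Lphi ^ 2 * lamMax P + 8 * pbar * Lphi * frobNorm (P * M) ≤ lamMin Q)
    (ψ : EuclideanSpace ℝ (Fin n) → EuclideanSpace ℝ (Fin m))
    (hbdd : ∀ x, ‖ψ x‖ ≤ phibar)
    (hlip : ∀ x x', ‖ψ x' - ψ x‖ ≤ Lphi * ‖x' - x‖)
    (pstar p : Matrix (Fin m) (Fin n) ℝ)
    (hpstar : opNorm pstar ≤ pbar)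
    (x e eplus : EuclideanSpace ℝ (Fin n))
    (heplus : eplus = mulVecE M e + mulVecE pᵀ (ψ (x + e)) - mulVecE pstarᵀ (ψ x))
    (hcone : opNorm (p - pstar) ≤
      (lamMin Q / (8 * phibar * (lamMax P * Lphi * pbar + frobNorm (P * M)))) * ‖e‖) :
    quadForm P eplus - quadForm P e ≤
      -(lamMin Q / 2) * ‖e‖ ^ 2 + phibar ^ 2 * lamMax P * (opNorm (p - pstar)) ^ 2 := by
  subst heplus
  set D := mulVecE pᵀ (ψ (x + e)) - mulVecE pstarᵀ (ψ x)
  have hD : ‖D‖ ≤ opNorm (p - pstar) * phibar + pbar * (Lphi * ‖e‖) := by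
    have hψ : ‖ψ (x + e) - ψ x‖ ≤ Lphi * ‖e‖ := by simpa using hlip x (x + e)
    calc ‖D‖ ≤ opNorm (p - pstar) * ‖ψ (x + e)‖ + opNorm pstar * ‖ψ (x + e) - ψ x‖ :=
          norm_transpose_mulVecE_sub_le p pstar _ _
      _ ≤ _ := by gcongr; exacts [norm_nonneg _, hbdd _]
  have hcross : ⟪D, mulVecE P (mulVecE M e)⟫ ≤ ‖D‖ * (frobNorm (P * M) * ‖e‖) := by
    rw [← mulVecE_mul]
    exact (real_inner_le_norm _ _).trans (by gcongr; exact norm_mulVecE_le_frobNorm _ _)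
  have hbound := cone_gain_bound hP.posSemidef.lamMax_nonneg (frobNorm_nonneg _) hphibar.le
    hLphi.le hpbar.le (norm_nonneg e) (norm_nonneg D) hgain hcone hD
  rw [add_sub_assoc, quadForm_add hP.isHermitian]
  linarith [quadForm_mulVecE_le_of_posSemidef hQ.isHermitian hLyap e,
    hP.isHermitian.quadForm_le_lamMax_mul D]

/-- Theorem 1 of the paper (one-step Lyapunov decrease in the conic region). -/
theorem stmt_0 {n m : ℕ} (hn : 0 < n) (hm : 0 < m)
    (M P Q : Matrix (Fin n) (Fin n) ℝ)
    (phibar Lphi pbar : ℝ)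
    (hphibar : 0 < phibar) (hLphi : 0 < Lphi) (hpbar : 0 < pbar)
    (hP : P.PosDef) (hQ : Q.PosDef)
    (hLyap : (P - Mᵀ * P * M - Q).PosSemidef)
    (hgain : 4 * pbar ^ 2 * Lphi ^ 2 * lamMax P + 8 * pbar * Lphi * frobNorm (P * M) ≤ lamMin Q)
    (ψ : EuclideanSpace ℝ (Fin n) → EuclideanSpace ℝ (Fin m))
    (hbdd : ∀ x, ‖ψ x‖ ≤ phibar)
    (hlip : ∀ x x', ‖ψ x' - ψ x‖ ≤ Lphi * ‖x' - x‖)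
    (pstar p : Matrix (Fin m) (Fin n) ℝ)
    (hpstar : opNorm pstar ≤ pbar)
    (x e eplus : EuclideanSpace ℝ (Fin n))
    (heplus : eplus = mulVecE M e + mulVecE pᵀ (ψ (x + e)) - mulVecE pstarᵀ (ψ x))
    (hcone : opNorm (p - pstar) ≤
      (lamMin Q / (8 * phibar * (lamMax P * Lphi * pbar + frobNorm (P * M)))) * ‖e‖) :
    quadForm P eplus - quadForm P e ≤
      -(lamMin Q / 2) * ‖e‖ ^ 2 + phibar ^ 2 * lamMax P * (opNorm (p - pstar)) ^ 2 :=
  stmt_0_general M P Q phibar Lphi pbar hphibar hLphi hpbar hP hQ hLyap hgain ψ hbdd hlip pstar p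
    hpstar x e eplus heplus hcone
end

section
/- Let a, b, c, d be positive reals with c ≤ b, let α ≥ 1, let φ : ℝⁿ × ℝᵏ → ℝⁿ, and let V : ℝⁿ → ℝ satisfy a‖ξ‖^α ≤ V(ξ) ≤ b‖ξ‖^α for all ξ ∈ ℝⁿ and V(φ(ξ, ν)) − V(ξ) ≤ −c‖ξ‖^α + d‖ν‖^α for all ξ ∈ ℝⁿ, ν ∈ ℝᵏ. Then for any sequences ξ : ℕ → ℝⁿ and ν : ℕ → ℝᵏ with ξ_{t+1} = φ(ξ_t, ν_t) for all t and ‖ν_t‖ ≤ ν̄ for all t, one has for every t ∈ ℕ: ‖ξ_t‖ ≤ (b/a)^{1/α}·(1 − c/b)^{t/α}·‖ξ₀‖ + (d·b/(a·c))^{1/α}·ν̄. -/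
open Matrix MeasureTheory Filter

theorem le_pow_mul_add_div_of_le_mul_add {u : ℕ → ℝ} {r w : ℝ} (hr₀ : 0 ≤ r) (hr₁ : r < 1)
    (hw : 0 ≤ w) (hu : ∀ s, u (s + 1) ≤ r * u s + w) (t : ℕ) :
    u t ≤ r ^ t * u 0 + w / (1 - r) := by
  have hr : 1 - r ≠ 0 := (sub_pos.2 hr₁).ne'
  induction t with
  | zero =>
    have : 0 ≤ w / (1 - r) := div_nonneg hw (sub_pos.2 hr₁).le
    simpa using this
  | succ m ih =>
    calc u (m + 1) ≤ r * u m + w := hu m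
      _ ≤ r * (r ^ m * u 0 + w / (1 - r)) + w := by gcongr
      _ = r ^ (m + 1) * u 0 + w / (1 - r) := by field_simp; ring

theorem le_rpow_inv_mul_add_of_rpow_le {x y z A B p : ℝ} (hx : 0 ≤ x) (hy : 0 ≤ y)
    (hz : 0 ≤ z) (hA : 0 ≤ A) (hB : 0 ≤ B) (hp : 1 ≤ p)
    (h : x ^ p ≤ A * y ^ p + B * z ^ p) :
    x ≤ A ^ (1 / p) * y + B ^ (1 / p) * z := by
  have hp₀ : 0 < p := one_pos.trans_le hp
  have hq₀ : 0 ≤ 1 / p := by positivity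
  have root_mul {C w : ℝ} (hC : 0 ≤ C) (hw : 0 ≤ w) : (C * w ^ p) ^ (1 / p) = C ^ (1 / p) * w := by
    rw [Real.mul_rpow hC (by positivity), one_div, Real.rpow_rpow_inv hw hp₀.ne']
  calc x = (x ^ p) ^ (1 / p) := by rw [one_div, Real.rpow_rpow_inv hx hp₀.ne']
    _ ≤ (A * y ^ p + B * z ^ p) ^ (1 / p) := by gcongr
    _ ≤ (A * y ^ p) ^ (1 / p) + (B * z ^ p) ^ (1 / p) :=
      Real.rpow_add_le_add_rpow (by positivity) (by positivity) hq₀ ((div_le_one hp₀).2 hp)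
    _ = A ^ (1 / p) * y + B ^ (1 / p) * z := by rw [root_mul hA hy, root_mul hB hz]

section ISSLyapunov

variable {E F : Type*} [Norm E] [SeminormedAddGroup F] {b c d α : ℝ} {φ : E × F → E} {V : E → ℝ}

theorem lyapunov_le_mul_add (hb : 0 < b) (hc : 0 ≤ c)
    (hV : ∀ ξ, V ξ ≤ b * ‖ξ‖ ^ α)
    (hdecrease : ∀ ξ ν, V (φ (ξ, ν)) - V ξ ≤ -c * ‖ξ‖ ^ α + d * ‖ν‖ ^ α) (ξ : E) (ν : F) :
    V (φ (ξ, ν)) ≤ (1 - c / b) * V ξ + d * ‖ν‖ ^ α := by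
  have : c / b * V ξ ≤ c * ‖ξ‖ ^ α := by
    calc c / b * V ξ ≤ c / b * (b * ‖ξ‖ ^ α) := by gcongr; exact hV ξ
      _ = c * ‖ξ‖ ^ α := by field_simp
  linarith [hdecrease ξ ν]

theorem lyapunov_trajectory_le (hb : 0 < b) (hc : 0 < c) (hd : 0 ≤ d) (hcb : c ≤ b)
    (hα : 0 ≤ α) (hV : ∀ ξ, V ξ ≤ b * ‖ξ‖ ^ α)
    (hdecrease : ∀ ξ ν, V (φ (ξ, ν)) - V ξ ≤ -c * ‖ξ‖ ^ α + d * ‖ν‖ ^ α)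
    {ξ : ℕ → E} {ν : ℕ → F} {nubar : ℝ} (hrec : ∀ t, ξ (t + 1) = φ (ξ t, ν t))
    (hν : ∀ t, ‖ν t‖ ≤ nubar) (t : ℕ) :
    V (ξ t) ≤ (1 - c / b) ^ t * V (ξ 0) + b / c * (d * nubar ^ α) := by
  have hnubar : 0 ≤ nubar := (norm_nonneg _).trans (hν 0)
  have hstep (s : ℕ) : V (ξ (s + 1)) ≤ (1 - c / b) * V (ξ s) + d * nubar ^ α := by
    rw [hrec s]
    calc V (φ (ξ s, ν s)) ≤ (1 - c / b) * V (ξ s) + d * ‖ν s‖ ^ α :=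
          lyapunov_le_mul_add hb hc.le hV hdecrease _ _
      _ ≤ (1 - c / b) * V (ξ s) + d * nubar ^ α := by gcongr; exact hν s
  have h := le_pow_mul_add_div_of_le_mul_add (u := fun s ↦ V (ξ s))
    (sub_nonneg.2 ((div_le_one hb).2 hcb)) (sub_lt_self 1 (div_pos hc hb))
    (by positivity : 0 ≤ d * nubar ^ α) hstep t
  have hgain : d * nubar ^ α / (1 - (1 - c / b)) = b / c * (d * nubar ^ α) := by
    rw [sub_sub_cancel, div_div_eq_mul_div]; ring
  rwa [hgain] at h

end ISSLyapunov

/-- Explicit version of Lemma 1: an ISS Lyapunov function with power-law comparison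
functions implies input-to-state stability with exponential transient and linear gain. -/
theorem stmt_3 {n k : ℕ}
    (a b c d α : ℝ) (ha : 0 < a) (hb : 0 < b) (hc : 0 < c) (hd : 0 < d)
    (hcb : c ≤ b) (hα : 1 ≤ α)
    (φ : EuclideanSpace ℝ (Fin n) × EuclideanSpace ℝ (Fin k) → EuclideanSpace ℝ (Fin n))
    (V : EuclideanSpace ℝ (Fin n) → ℝ)
    (hsandwich : ∀ ξ, a * ‖ξ‖ ^ α ≤ V ξ ∧ V ξ ≤ b * ‖ξ‖ ^ α)
    (hdecrease : ∀ ξ ν, V (φ (ξ, ν)) - V ξ ≤ -c * ‖ξ‖ ^ α + d * ‖ν‖ ^ α) :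
    ∀ (ξ : ℕ → EuclideanSpace ℝ (Fin n)) (ν : ℕ → EuclideanSpace ℝ (Fin k)) (nubar : ℝ),
      (∀ t, ξ (t + 1) = φ (ξ t, ν t)) → (∀ t, ‖ν t‖ ≤ nubar) →
      ∀ t : ℕ, ‖ξ t‖ ≤
        (b / a) ^ (1 / α) * (1 - c / b) ^ ((t : ℝ) / α) * ‖ξ 0‖
          + (d * b / (a * c)) ^ (1 / α) * nubar := by
  intro ξ ν nubar hrec hν t
  have hα₀ : 0 ≤ α := zero_le_one.trans hα
  have hr₀ : 0 ≤ 1 - c / b := sub_nonneg.2 ((div_le_one hb).2 hcb)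
  have hV := lyapunov_trajectory_le hb hc hd.le hcb hα₀ (fun ξ ↦ (hsandwich ξ).2) hdecrease
    hrec hν t
  have hpow : ‖ξ t‖ ^ α ≤
      b / a * (1 - c / b) ^ t * ‖ξ 0‖ ^ α + d * b / (a * c) * nubar ^ α := by
    have hlow := (hsandwich (ξ t)).1
    have hV₀ := mul_le_mul_of_nonneg_left (hsandwich (ξ 0)).2 (pow_nonneg hr₀ t)
    rw [← mul_le_mul_iff_right₀ ha]
    calc a * ‖ξ t‖ ^ α ≤ (1 - c / b) ^ t * (b * ‖ξ 0‖ ^ α) + b / c * (d * nubar ^ α) := by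
          linarith
      _ = _ := by field_simp
  calc ‖ξ t‖ ≤ (b / a * (1 - c / b) ^ t) ^ (1 / α) * ‖ξ 0‖
        + (d * b / (a * c)) ^ (1 / α) * nubar :=
      le_rpow_inv_mul_add_of_rpow_le (norm_nonneg _) (norm_nonneg _)
        ((norm_nonneg _).trans (hν 0)) (by positivity) (by positivity) hα hpow
    _ = _ := by
      rw [Real.mul_rpow (by positivity) (pow_nonneg hr₀ t), ← Real.rpow_natCast,
        ← Real.rpow_mul hr₀, mul_one_div]
end

section
/- Let A ∈ ℝ^{n×n}, C ∈ ℝ^{p×n}, K ∈ ℝ^{n×p}, let P, Q ∈ ℝ^{n×n} be symmetric with P positive definite, and let p̄⋆ > 0, Lφ > 0, κ₁ > 0, κ₂ > 0, κ₃ > 0 be scalars such that: (i) (PA + KC)ᵀP⁻¹(PA + KC) − P + Q ⪯ 0; (ii) Q ⪰ κ₁·I; (iii) P ⪯ κ₂·I; (iv) ‖PA + KC‖_F ≤ κ₃; and (v) 4·Lφ²·p̄⋆²·κ₂ + 8·p̄⋆·Lφ·κ₃ ≤ κ₁. Then, setting L₀ := P⁻¹K, the matrices satisfy (A + L₀C)ᵀP(A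 + L₀C) − P ⪯ −Q and 4·p̄⋆²·Lφ²·λmax(P) + 8·p̄⋆·Lφ·‖P(A + L₀C)‖_F ≤ λmin(Q). -/
open Matrix MeasureTheory Filter

/-! With `L = A + P⁻¹KC` one has `PL = PA + KC`, hence `LᵀPL = (PL)ᵀP⁻¹(PL)` because `P` is
symmetric, and condition (i) is exactly the Lyapunov inequality. Since `Q - κ₁ I` and `κ₂ I - P`
have nonnegative spectra, `κ₁ ≤ λmin(Q)` and `λmax(P) ≤ κ₂`; with (iv), inequality (v) then
gives the gain condition. -/

namespace Matrix

section NonsingInv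

variable {ι κ m R : Type*} [Fintype ι] [Fintype m] [DecidableEq ι] [CommRing R]

theorem mul_add_nonsing_inv_mul_mul {P : Matrix ι ι R} (hP : IsUnit P.det) (A : Matrix ι κ R)
    (K : Matrix ι m R) (C : Matrix m κ R) : P * (A + P⁻¹ * K * C) = P * A + K * C := by
  rw [Matrix.mul_add, Matrix.mul_assoc P⁻¹, mul_nonsing_inv_cancel_left _ _ hP]

theorem transpose_mul_mul_eq_transpose_mul_nonsing_inv_mul {P : Matrix ι ι R} (hPs : P.IsSymm)
    (hP : IsUnit P.det) (M : Matrix ι κ R) : Mᵀ * P * M = (P * M)ᵀ * P⁻¹ * (P * M) := by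
  rw [transpose_mul, hPs.eq, Matrix.mul_assoc Mᵀ P P⁻¹, mul_nonsing_inv _ hP, Matrix.mul_one,
    Matrix.mul_assoc]

end NonsingInv

section Spectrum

variable {ι : Type*} [Fintype ι] [DecidableEq ι] {S : Matrix ι ι ℝ} {c r : ℝ}

theorem le_of_mem_spectrum_of_posSemidef_sub_smul_one (h : (S - c • 1).PosSemidef)
    (hr : r ∈ spectrum ℝ S) : c ≤ r := by
  have hrc : r - c ∈ spectrum ℝ (S - c • 1) := by
    rw [← Algebra.algebraMap_eq_smul_one, ← spectrum.sub_singleton_eq]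
    exact Set.sub_mem_sub hr rfl
  exact sub_nonneg.1 ((posSemidef_iff_isHermitian_and_spectrum_nonneg.1 h).2 hrc)

theorem le_of_mem_spectrum_of_posSemidef_smul_one_sub (h : (c • 1 - S).PosSemidef)
    (hr : r ∈ spectrum ℝ S) : r ≤ c := by
  have hcr : c - r ∈ spectrum ℝ (c • 1 - S) := by
    rw [← Algebra.algebraMap_eq_smul_one, ← spectrum.singleton_sub_eq]
    exact Set.sub_mem_sub rfl hr
  exact sub_nonneg.1 ((posSemidef_iff_isHermitian_and_spectrum_nonneg.1 h).2 hcr)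

theorem IsHermitian.spectrum_real_nonempty [Nonempty ι] (hS : S.IsHermitian) :
    (spectrum ℝ S).Nonempty :=
  hS.spectrum_real_eq_range_eigenvalues ▸ Set.range_nonempty _

end Spectrum

end Matrix

section Eigenvalues

variable {n : ℕ} [NeZero n] {S : Matrix (Fin n) (Fin n) ℝ} {c : ℝ}

theorem lamMax_le_of_posSemidef_smul_one_sub (h : (c • 1 - S).PosSemidef) : lamMax S ≤ c := by
  have hS : S.IsHermitian := by
    simpa using (isHermitian_one.smul (.all c)).sub h.isHermitian
  exact csSup_le hS.spectrum_real_nonempty fun _ ↦ le_of_mem_spectrum_of_posSemidef_smul_one_sub h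

theorem le_lamMin_of_posSemidef_sub_smul_one (h : (S - c • 1).PosSemidef) : c ≤ lamMin S := by
  have hS : S.IsHermitian := by
    simpa using h.isHermitian.add (isHermitian_one.smul (.all c))
  exact le_csInf hS.spectrum_real_nonempty fun _ ↦ le_of_mem_spectrum_of_posSemidef_sub_smul_one h

end Eigenvalues

theorem stmt_4_general {n p : ℕ}
    (A : Matrix (Fin n) (Fin n) ℝ) (C : Matrix (Fin p) (Fin n) ℝ)
    (K : Matrix (Fin n) (Fin p) ℝ)
    (P Q : Matrix (Fin n) (Fin n) ℝ) (hP : P.PosDef)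
    (pbar Lphi κ₁ κ₂ κ₃ : ℝ)
    (hpbar : 0 < pbar) (hLphi : 0 < Lphi)
    (hi : (P - Q - (P * A + K * C)ᵀ * P⁻¹ * (P * A + K * C)).PosSemidef)
    (hii : (Q - κ₁ • (1 : Matrix (Fin n) (Fin n) ℝ)).PosSemidef)
    (hiii : (κ₂ • (1 : Matrix (Fin n) (Fin n) ℝ) - P).PosSemidef)
    (hiv : frobNorm (P * A + K * C) ≤ κ₃)
    (hv : 4 * Lphi ^ 2 * pbar ^ 2 * κ₂ + 8 * pbar * Lphi * κ₃ ≤ κ₁) :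
    (P - (A + (P⁻¹ * K) * C)ᵀ * P * (A + (P⁻¹ * K) * C) - Q).PosSemidef ∧
      4 * pbar ^ 2 * Lphi ^ 2 * lamMax P
        + 8 * pbar * Lphi * frobNorm (P * (A + (P⁻¹ * K) * C)) ≤ lamMin Q := by
  have hdet : IsUnit P.det := (isUnit_iff_isUnit_det P).1 hP.isUnit
  have hPL := mul_add_nonsing_inv_mul_mul hdet A K C
  refine ⟨?_, ?_⟩
  · rw [transpose_mul_mul_eq_transpose_mul_nonsing_inv_mul
      (isHermitian_iff_isSymm.1 hP.isHermitian) hdet, hPL, sub_right_comm]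
    exact hi
  · cases n with
    -- Empty spectra: `lamMax` and `lamMin` are the junk values `sSup ∅ = sInf ∅ = 0`.
    | zero => simp [lamMax, lamMin, frobNorm, spectrum.of_subsingleton]
    | succ n =>
      rw [hPL]
      calc 4 * pbar ^ 2 * Lphi ^ 2 * lamMax P + 8 * pbar * Lphi * frobNorm (P * A + K * C)
          ≤ 4 * pbar ^ 2 * Lphi ^ 2 * κ₂ + 8 * pbar * Lphi * κ₃ := by
            gcongr
            exact lamMax_le_of_posSemidef_smul_one_sub hiii
        _ ≤ κ₁ := by linarith
        _ ≤ lamMin Q := le_lamMin_of_posSemidef_sub_smul_one hii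

/-- Theorem 2 of the paper: feasibility of the SDP conditions implies the hypotheses of
Theorem 1 for the gain L₀ = P⁻¹K. -/
theorem stmt_4 {n p : ℕ}
    (A : Matrix (Fin n) (Fin n) ℝ) (C : Matrix (Fin p) (Fin n) ℝ)
    (K : Matrix (Fin n) (Fin p) ℝ)
    (P Q : Matrix (Fin n) (Fin n) ℝ) (hP : P.PosDef) (hQ : Q.IsHermitian)
    (pbar Lphi κ₁ κ₂ κ₃ : ℝ)
    (hpbar : 0 < pbar) (hLphi : 0 < Lphi)
    (hκ₁ : 0 < κ₁) (hκ₂ : 0 < κ₂) (hκ₃ : 0 < κ₃)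
    (hi : (P - Q - (P * A + K * C)ᵀ * P⁻¹ * (P * A + K * C)).PosSemidef)
    (hii : (Q - κ₁ • (1 : Matrix (Fin n) (Fin n) ℝ)).PosSemidef)
    (hiii : (κ₂ • (1 : Matrix (Fin n) (Fin n) ℝ) - P).PosSemidef)
    (hiv : frobNorm (P * A + K * C) ≤ κ₃)
    (hv : 4 * Lphi ^ 2 * pbar ^ 2 * κ₂ + 8 * pbar * Lphi * κ₃ ≤ κ₁) :
    (P - (A + (P⁻¹ * K) * C)ᵀ * P * (A + (P⁻¹ * K) * C) - Q).PosSemidef ∧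
      4 * pbar ^ 2 * Lphi ^ 2 * lamMax P
        + 8 * pbar * Lphi * frobNorm (P * (A + (P⁻¹ * K) * C)) ≤ lamMin Q :=
  stmt_4_general A C K P Q hP pbar Lphi κ₁ κ₂ κ₃ hpbar hLphi hi hii hiii hiv hv
end

section
/- Let P, Q ∈ ℝ^{n×n} be symmetric with P positive definite, let A ∈ ℝ^{n×n}, C ∈ ℝ^{p×n}, K ∈ ℝ^{n×p}, Cq ∈ ℝ^{q×n}, Bφ ∈ ℝ^{n×r}, and let L̂φ ∈ ℝ. Set R := PA + KC and L := P⁻¹K. If the symmetric block matrix [[−P + Q, Rᵀ, Rᵀ, L̂φ·Cqᵀ], [R, −P, 0, 0], [R, 0, BφᵀP Bφ − I, 0], [L̂φ·Cq, 0, 0, −I]] is negative semidefinite, then the block matrix [[Ω, Rᵀ], [R, BφᵀP Bφ − I]] is negative semidefinite, where Ω := (A + LC)ᵀP(A + LC) − P + Q + L̂φ²·CqᵀCq. -/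
open Matrix MeasureTheory Filter

/-!
Pull the 4×4 block matrix back along `(x, z) ↦ (x, P⁻¹R x, z, L̂φ Cq x)`. Substituting these
values for the second and fourth block variables completes the square in them, so the diagonal
blocks `-P` and `-I` are traded for `RᵀP⁻¹R = (A+LC)ᵀP(A+LC)` and `L̂φ²·CqᵀCq`, and congruence
preserves semidefiniteness.
-/

namespace Matrix

def schurLift {m k o α : Type*} [Zero α] [One α] [DecidableEq m] (l : Type*) [DecidableEq l]
    (Y : Matrix k m α) (G : Matrix o m α) : Matrix ((m ⊕ k) ⊕ (l ⊕ o)) (m ⊕ l) α :=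
  fromRows (fromBlocks 1 0 Y 0) (fromBlocks 0 1 G 0)

variable {m k l o α : Type*} [Fintype m] [Fintype k] [Fintype l] [Fintype o]
  [DecidableEq m] [DecidableEq l] [DecidableEq o]

theorem transpose_schurLift_mul_fromBlocks_mul_schurLift [CommRing α]
    (A : Matrix m m α) (P : Matrix k k α) (D : Matrix l l α)
    (R Y : Matrix k m α) (B : Matrix l m α) (G : Matrix o m α) (hY : P * Y = R) :
    (schurLift l Y G)ᵀ *
        fromBlocks (fromBlocks A Rᵀ R (-P)) (fromBlocks Bᵀ Gᵀ 0 0)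
          (fromBlocks B 0 G 0) (fromBlocks D 0 0 (-1)) * schurLift l Y G =
      fromBlocks (A + Rᵀ * Y + Gᵀ * G) Bᵀ B D := by
  subst hY
  rw [Matrix.mul_assoc]
  simp only [schurLift, transpose_fromRows, fromBlocks_transpose, fromBlocks_mul_fromRows,
    fromCols_mul_fromRows, fromBlocks_multiply, fromBlocks_add]
  congr 1 <;> simp

theorem PosSemidef.neg_fromBlocks_schur_of_neg_fromBlocks [CommRing α] [PartialOrder α]
    [StarRing α] [TrivialStar α]
    {A : Matrix m m α} {P : Matrix k k α} {D : Matrix l l α}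
    {R Y : Matrix k m α} {B : Matrix l m α} {G : Matrix o m α} (hY : P * Y = R)
    (h : (-fromBlocks (fromBlocks A Rᵀ R (-P)) (fromBlocks Bᵀ Gᵀ 0 0)
          (fromBlocks B 0 G 0) (fromBlocks D 0 0 (-1))).PosSemidef) :
    (-fromBlocks (A + Rᵀ * Y + Gᵀ * G) Bᵀ B D).PosSemidef := by
  have := h.conjTranspose_mul_mul_same (schurLift l Y G)
  rwa [conjTranspose_eq_transpose_of_trivial, Matrix.mul_neg, Matrix.neg_mul,
    transpose_schurLift_mul_fromBlocks_mul_schurLift A P D R Y B G hY] at this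

end Matrix

/-- `Bφ` is square: the block structure forces its column dimension `r` to equal `n`. -/
theorem stmt_7_general {n p q : ℕ}
    (P Q : Matrix (Fin n) (Fin n) ℝ) (hP : P.PosDef)
    (A : Matrix (Fin n) (Fin n) ℝ) (C : Matrix (Fin p) (Fin n) ℝ)
    (K : Matrix (Fin n) (Fin p) ℝ) (Cq : Matrix (Fin q) (Fin n) ℝ)
    (Bphi : Matrix (Fin n) (Fin n) ℝ) (Lhat : ℝ)
    (R : Matrix (Fin n) (Fin n) ℝ) (hR : R = P * A + K * C)
    (L : Matrix (Fin n) (Fin p) ℝ) (hL : L = P⁻¹ * K)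
    (hbig : (-(Matrix.fromBlocks
        (Matrix.fromBlocks (-P + Q) Rᵀ R (-P))
        (Matrix.fromBlocks Rᵀ (Lhat • Cqᵀ) 0 0)
        (Matrix.fromBlocks R 0 (Lhat • Cq) 0)
        (Matrix.fromBlocks (Bphiᵀ * P * Bphi - 1) 0 0 (-1)))).PosSemidef) :
    (-(Matrix.fromBlocks
        ((A + L * C)ᵀ * P * (A + L * C) - P + Q + Lhat ^ 2 • (Cqᵀ * Cq))
        Rᵀ R (Bphiᵀ * P * Bphi - 1))).PosSemidef := by
  have hdet : IsUnit P.det := (isUnit_iff_isUnit_det P).mp hP.isUnit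
  have hRM : R = P * (A + L * C) := by
    rw [hR, hL, Matrix.mul_add, ← Matrix.mul_assoc P, mul_nonsing_inv_cancel_left _ _ hdet]
  have hRPR : Rᵀ * (P⁻¹ * R) = (A + L * C)ᵀ * P * (A + L * C) := by
    rw [hRM, transpose_mul, nonsing_inv_mul_cancel_left _ _ hdet,
      ← conjTranspose_eq_transpose_of_trivial P, hP.isHermitian.eq]
  have hCq : (Lhat • Cq)ᵀ * (Lhat • Cq) = Lhat ^ 2 • (Cqᵀ * Cq) := by
    rw [transpose_smul, Matrix.smul_mul, Matrix.mul_smul, smul_smul, sq]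
  have hΩ : (A + L * C)ᵀ * P * (A + L * C) - P + Q + Lhat ^ 2 • (Cqᵀ * Cq) =
      -P + Q + Rᵀ * (P⁻¹ * R) + (Lhat • Cq)ᵀ * (Lhat • Cq) := by
    rw [hRPR, hCq]
    abel
  rw [hΩ]
  exact hbig.neg_fromBlocks_schur_of_neg_fromBlocks (G := Lhat • Cq)
    (mul_nonsing_inv_cancel_left P R hdet)

/-- Successive Schur complement computation in the proof of Theorem 3: the 4×4 block LMI
implies the reduced 2×2 block LMI with Ω = (A+LC)ᵀP(A+LC) − P + Q + L̂φ²·CqᵀCq.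
(The block structure forces the column dimension r of Bφ to equal n.)
A symmetric matrix S is negative semidefinite iff (-S) is positive semidefinite. -/
theorem stmt_7 {n p q : ℕ}
    (P Q : Matrix (Fin n) (Fin n) ℝ) (hP : P.PosDef) (hQ : Q.IsHermitian)
    (A : Matrix (Fin n) (Fin n) ℝ) (C : Matrix (Fin p) (Fin n) ℝ)
    (K : Matrix (Fin n) (Fin p) ℝ) (Cq : Matrix (Fin q) (Fin n) ℝ)
    (Bphi : Matrix (Fin n) (Fin n) ℝ) (Lhat : ℝ)
    (R : Matrix (Fin n) (Fin n) ℝ) (hR : R = P * A + K * C)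
    (L : Matrix (Fin n) (Fin p) ℝ) (hL : L = P⁻¹ * K)
    (hbig : (-(Matrix.fromBlocks
        (Matrix.fromBlocks (-P + Q) Rᵀ R (-P))
        (Matrix.fromBlocks Rᵀ (Lhat • Cqᵀ) 0 0)
        (Matrix.fromBlocks R 0 (Lhat • Cq) 0)
        (Matrix.fromBlocks (Bphiᵀ * P * Bphi - 1) 0 0 (-1)))).PosSemidef) :
    (-(Matrix.fromBlocks
        ((A + L * C)ᵀ * P * (A + L * C) - P + Q + Lhat ^ 2 • (Cqᵀ * Cq))
        Rᵀ R (Bphiᵀ * P * Bphi - 1))).PosSemidef :=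
  stmt_7_general P Q hP A C K Cq Bphi Lhat R hR L hL hbig
end
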